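/- arXiv:1112.4024 — 3 statements merged into one kernel-verified Lean document; each statement's English description precedes it below -/
import Mathlib

section
/- (Maharam recurrence) Let (X, μ) be a σ-finite measure space with a measurable measure-preserving flow (u_t)_{t∈ℝ}. If there exists a measurable set B ⊂ X with 0 < μ(B) < ∞ such that for μ-almost every x ∈ X one has ∫₀^∞ χ_B(x u_t) dt = ∞, then the flow is conservative: for every measurable set S with μ(S) > 0, for μ-almost every x ∈ S the set {t > 0 : x u_t ∈ S} is unbounded. -/
/-!
Put `g x = ∫₀¹ χ_B(φ_t x) dt`. By Tonelli and invariance of `μ`, `∫ g dμ = μ B < ∞`, while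
`∑ₙ g(φₙ x) = ∫₀^∞ χ_B(φ_t x) dt = ∞` for a.e. `x`. If the time-one map `φ₁` had a wandering set
`W` of positive measure, the images `φₙ W` would be disjoint, so
`∞ = ∫_W ∑ₙ g ∘ φₙ = ∑ₙ ∫_{φₙ W} g ≤ ∫ g < ∞`. Hence `φ₁` is conservative, and Poincaré
recurrence for `φ₁` gives unbounded return times.
-/

open MeasureTheory ENNReal Set Function

theorem Function.Injective.pairwise_disjoint_image_iterate {α : Type*} {f : α → α}
    (hf : Injective f) {s : Set α} (hs : ∀ x ∈ s, ∀ m ≠ 0, f^[m] x ∉ s) :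
    Pairwise (Disjoint on fun n => f^[n] '' s) := by
  refine (pairwise_disjoint_on _).2 fun i j hij => disjoint_left.2 ?_
  rintro _ ⟨a, ha, rfl⟩ ⟨b, hb, hba⟩
  obtain ⟨k, rfl⟩ := Nat.exists_eq_add_of_lt hij
  rw [add_assoc, iterate_add_apply] at hba
  exact hs b hb (k + 1) k.succ_ne_zero (hf.iterate i hba ▸ ha)

theorem MeasurableEmbedding.iterate {α : Type*} [MeasurableSpace α] {f : α → α}
    (hf : MeasurableEmbedding f) (n : ℕ) : MeasurableEmbedding f^[n] := by
  induction n with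
  | zero => exact MeasurableEmbedding.id
  | succ n ih => rw [iterate_succ]; exact ih.comp hf

theorem MeasureTheory.MeasurePreserving.conservative_of_ae_tsum_iterate_eq_top
    {α : Type*} [MeasurableSpace α] {μ : Measure α} {f : α → α}
    (hf : MeasurePreserving f μ μ) (hfe : MeasurableEmbedding f) {g : α → ℝ≥0∞}
    (hg : Measurable g) (hg_int : ∫⁻ x, g x ∂μ ≠ ∞)
    (h : ∀ᵐ x ∂μ, ∑' n, g (f^[n] x) = ∞) : Conservative f μ := by
  refine ⟨hf.quasiMeasurePreserving, fun s hs hs0 => ?_⟩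
  by_contra! hwander
  refine hg_int (eq_top_iff.2 ?_)
  calc ∞ = ∫⁻ x in s, ∑' n, g (f^[n] x) ∂μ := by
        rw [lintegral_congr_ae (ae_restrict_of_ae h), setLIntegral_const, top_mul hs0]
    _ = ∑' n, ∫⁻ x in s, g (f^[n] x) ∂μ :=
        lintegral_tsum fun n => (hg.comp (hf.iterate n).measurable).aemeasurable
    _ = ∑' n, ∫⁻ x in f^[n] '' s, g x ∂μ :=
        tsum_congr fun n => (hf.iterate n).setLIntegral_comp_emb (hfe.iterate n) g s
    _ = ∫⁻ x in ⋃ n, f^[n] '' s, g x ∂μ :=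
        (lintegral_iUnion (fun n => (hfe.iterate n).measurableSet_image.2 hs)
          (hfe.injective.pairwise_disjoint_image_iterate hwander) g).symm
    _ ≤ ∫⁻ x, g x ∂μ := setLIntegral_le_lintegral _ _

theorem lintegral_Ioi_zero_eq_tsum_lintegral_Ioc (h : ℝ → ℝ≥0∞) :
    ∫⁻ t in Ioi 0, h t = ∑' n : ℕ, ∫⁻ t in Ioc 0 1, h (t + n) := by
  have hunion : ⋃ n : ℕ, Ioc (n : ℝ) (n + 1) = Ioi 0 := by
    simpa using iUnion_Ioc_map_succ_eq_Ioi (f := fun n : ℕ => (n : ℝ))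
      (fun n => by simp) (not_bddAbove_iff.2 fun x =>
        let ⟨n, hn⟩ := exists_nat_gt x; ⟨n, mem_range_self n, hn⟩)
  have hdisj : Pairwise (Disjoint on fun n : ℕ => Ioc (n : ℝ) (n + 1)) := by
    simpa using Monotone.pairwise_disjoint_on_Ioc_succ (f := fun n : ℕ => (n : ℝ))
      Nat.mono_cast
  rw [← hunion, lintegral_iUnion (fun _ => measurableSet_Ioc) hdisj]
  refine tsum_congr fun n => ?_
  rw [← (measurePreserving_add_right volume (n : ℝ)).setLIntegral_comp_preimage_emb
    (measurableEmbedding_addRight _), preimage_add_const_Ioc]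
  simp

section Flow

variable {X : Type*} {φ : ℝ → X → X}

theorem flow_one_iterate (hid : ∀ x, φ 0 x = x) (hflow : ∀ s t x, φ (s + t) x = φ s (φ t x))
    (n : ℕ) (x : X) : (φ 1)^[n] x = φ n x := by
  induction n with
  | zero => simp [hid]
  | succ n ih => rw [iterate_succ_apply', ih, ← hflow, add_comm, Nat.cast_succ]

theorem lintegral_Ioi_flow_eq_tsum (hflow : ∀ s t x, φ (s + t) x = φ s (φ t x))
    (h : X → ℝ≥0∞) (x : X) :
    ∫⁻ t in Ioi 0, h (φ t x) = ∑' n : ℕ, ∫⁻ t in Ioc 0 1, h (φ t (φ n x)) := by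
  simp only [lintegral_Ioi_zero_eq_tsum_lintegral_Ioc, hflow]

variable [MeasurableSpace X]

theorem measurableEmbedding_flow (hid : ∀ x, φ 0 x = x)
    (hflow : ∀ s t x, φ (s + t) x = φ s (φ t x)) (hφ : ∀ t, Measurable (φ t)) (t : ℝ) :
    MeasurableEmbedding (φ t) :=
  MeasurableEmbedding.of_measurable_inverse (g := φ (-t)) (hφ t)
    (by
      rw [range_eq_univ.2 fun x => ⟨φ (-t) x, by rw [← hflow, add_neg_cancel, hid]⟩]
      exact .univ)
    (hφ (-t))
    fun x => by rw [← hflow, neg_add_cancel, hid]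

theorem lintegral_lintegral_Ioc_flow_eq {μ : Measure X} [SFinite μ]
    (hmeas : Measurable fun p : ℝ × X => φ p.1 p.2) (hpres : ∀ t, MeasurePreserving (φ t) μ μ)
    {h : X → ℝ≥0∞} (hh : Measurable h) :
    ∫⁻ x, (∫⁻ t in Ioc 0 1, h (φ t x)) ∂μ = ∫⁻ x, h x ∂μ := by
  rw [lintegral_lintegral_swap (f := fun x t => h (φ t x))
    (hh.comp (hmeas.comp measurable_swap)).aemeasurable]
  simp [(hpres _).lintegral_comp hh]

theorem ae_unbounded_return_of_conservative {μ : Measure X} (hid : ∀ x, φ 0 x = x)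
    (hflow : ∀ s t x, φ (s + t) x = φ s (φ t x)) (hcons : Conservative (φ 1) μ)
    {S : Set X} (hS : MeasurableSet S) :
    ∀ᵐ x ∂μ, x ∈ S → ∀ T : ℝ, ∃ t : ℝ, T < t ∧ 0 < t ∧ φ t x ∈ S := by
  filter_upwards [hcons.ae_mem_imp_frequently_image_mem hS.nullMeasurableSet] with x hx hxS T
  obtain ⟨n, hn, hnS⟩ := Filter.frequently_atTop.1 (hx hxS) (⌈T⌉₊ + 1)
  refine ⟨n, ?_, ?_, flow_one_iterate hid hflow n x ▸ hnS⟩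
  · exact (Nat.le_ceil T).trans_lt (by exact_mod_cast hn)
  · exact_mod_cast hn.trans_lt' ⌈T⌉₊.succ_pos

end Flow

theorem stmt6_general {X : Type*} [MeasurableSpace X] (μ : Measure X) [SigmaFinite μ]
    (φ : ℝ → X → X)
    (hmeas : Measurable fun p : ℝ × X => φ p.1 p.2)
    (hid : ∀ x, φ 0 x = x)
    (hflow : ∀ s t x, φ (s + t) x = φ s (φ t x))
    (hpres : ∀ t, MeasurePreserving (φ t) μ μ)
    (B : Set X) (hB : MeasurableSet B) (hBfin : μ B < ⊤)
    (hinf : ∀ᵐ x ∂μ, (∫⁻ t in Set.Ioi (0 : ℝ),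
      Set.indicator B (fun _ => (1 : ℝ≥0∞)) (φ t x)) = ⊤) :
    ∀ S : Set X, MeasurableSet S → 0 < μ S →
      ∀ᵐ x ∂μ, x ∈ S → ∀ T : ℝ, ∃ t : ℝ, T < t ∧ 0 < t ∧ φ t x ∈ S := by
  have hχ : Measurable (B.indicator fun _ => (1 : ℝ≥0∞)) := measurable_const.indicator hB
  set g : X → ℝ≥0∞ := fun x => ∫⁻ t in Ioc (0 : ℝ) 1, B.indicator (fun _ => 1) (φ t x)
  have hg : Measurable g :=
    Measurable.lintegral_prod_right' ((hχ.comp hmeas).comp measurable_swap)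
  have hg_int : ∫⁻ x, g x ∂μ ≠ ∞ := by
    rw [lintegral_lintegral_Ioc_flow_eq hmeas hpres hχ, lintegral_indicator_const hB, one_mul]
    exact hBfin.ne
  have hg_sum : ∀ᵐ x ∂μ, ∑' n, g ((φ 1)^[n] x) = ∞ := by
    filter_upwards [hinf] with x hx
    rw [lintegral_Ioi_flow_eq_tsum hflow] at hx
    simpa only [flow_one_iterate hid hflow] using hx
  have hcons : Conservative (φ 1) μ :=
    (hpres 1).conservative_of_ae_tsum_iterate_eq_top
      (measurableEmbedding_flow hid hflow (fun t => (hpres t).measurable) 1) hg hg_int hg_sum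
  exact fun S hS _ => ae_unbounded_return_of_conservative hid hflow hcons hS

/-- Maharam's recurrence theorem: if a measurable measure-preserving flow `φ` on a
σ-finite measure space admits a set `B` of finite positive measure such that almost
every orbit spends infinite time in `B`, then the flow is conservative: for every set
`S` of positive measure, a.e. point of `S` returns to `S` for an unbounded set of
positive times. -/
theorem stmt6 {X : Type*} [MeasurableSpace X] (μ : Measure X) [SigmaFinite μ]
    (φ : ℝ → X → X)
    (hmeas : Measurable fun p : ℝ × X => φ p.1 p.2)
    (hid : ∀ x, φ 0 x = x)
    (hflow : ∀ s t x, φ (s + t) x = φ s (φ t x))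
    (hpres : ∀ t, MeasurePreserving (φ t) μ μ)
    (B : Set X) (hB : MeasurableSet B) (hB0 : 0 < μ B) (hBfin : μ B < ⊤)
    (hinf : ∀ᵐ x ∂μ, (∫⁻ t in Set.Ioi (0 : ℝ),
      Set.indicator B (fun _ => (1 : ℝ≥0∞)) (φ t x)) = ⊤) :
    ∀ S : Set X, MeasurableSet S → 0 < μ S →
      ∀ᵐ x ∂μ, x ∈ S → ∀ T : ℝ, ∃ t : ℝ, T < t ∧ 0 < t ∧ φ t x ∈ S :=
  stmt6_general μ φ hmeas hid hflow hpres B hB hBfin hinf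
end

section
/- Let λ be Lebesgue measure on a bounded interval I, let f_i, f, g_i, g ∈ L²(I, λ) be nonnegative with f_i → f and g_i → g in L²(I), let O ⊂ I be Borel, and let (L_i) be Borel subsets of I such that ∫_{O \ L_i} f_i dλ → 0. Then limsup_i ∫_{O \ L_i} g_i dλ ≤ ∫_{O ∩ {f = 0}} g dλ. -/
/-!
Since `L²` convergence on a finite measure space implies `L¹` convergence, with
`A i = O \ L i` we get `∫_{A i} g_i - ∫_{A i} g → 0` and `∫_{A i} f → 0`. The latter says
`1_{A i} f → 0` in `L¹`, so every subsequence has a further subsequence along which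
`1_{A i}(x) → 0` at almost every `x` with `f x ≠ 0`; by dominated convergence
`∫_{A i ∩ {f ≠ 0}} g → 0`. What is left of `∫_{A i} g` is at most `∫_{O ∩ {f = 0}} g`
because `g ≥ 0`.
-/

open MeasureTheory Filter Topology
open scoped ENNReal

variable {α E : Type*} [MeasurableSpace α] {μ : Measure α} [NormedAddCommGroup E]

theorem tendsto_eLpNorm_one_of_tendsto_eLpNorm [IsFiniteMeasure μ] {q : ℝ≥0∞} (hq : 1 ≤ q)
    {u : ℕ → α → E} (hu : ∀ i, AEStronglyMeasurable (u i) μ)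
    (h : Tendsto (fun i => eLpNorm (u i) q μ) atTop (𝓝 0)) :
    Tendsto (fun i => eLpNorm (u i) 1 μ) atTop (𝓝 0) := by
  have hexp : 0 ≤ 1 / (1 : ℝ≥0∞).toReal - 1 / q.toReal := by
    rcases eq_or_ne q ∞ with rfl | hq_top
    · simp
    · have : 1 ≤ q.toReal := by simpa using ENNReal.toReal_mono hq_top hq
      simpa using inv_le_one_of_one_le₀ this
  have hC := ENNReal.rpow_ne_top_of_nonneg hexp (measure_ne_top μ Set.univ)
  refine tendsto_of_tendsto_of_tendsto_of_le_of_le tendsto_const_nhds ?_ (fun _ => zero_le)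
    fun i => eLpNorm_le_eLpNorm_mul_rpow_measure_univ hq (hu i)
  simpa using ENNReal.Tendsto.mul_const h (Or.inr hC)

theorem tendsto_setIntegral_sub_of_tendsto_eLpNorm [IsFiniteMeasure μ] [NormedSpace ℝ E]
    {q : ℝ≥0∞} (hq : 1 ≤ q) {u : ℕ → α → E} {v : α → E} (hu : ∀ i, MemLp (u i) q μ)
    (hv : MemLp v q μ) (h : Tendsto (fun i => eLpNorm (u i - v) q μ) atTop (𝓝 0))
    (A : ℕ → Set α) :
    Tendsto (fun i => ∫ x in A i, u i x ∂μ - ∫ x in A i, v x ∂μ) atTop (𝓝 0) := by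
  have h1 := tendsto_eLpNorm_one_of_tendsto_eLpNorm hq (fun i => (hu i).1.sub hv.1) h
  refine squeeze_zero_norm (fun i => ?_)
    (by simpa using (ENNReal.tendsto_toReal ENNReal.zero_ne_top).comp h1)
  have hui := (hu i).integrable hq
  have hvi := hv.integrable hq
  calc ‖∫ x in A i, u i x ∂μ - ∫ x in A i, v x ∂μ‖
      = ‖∫ x in A i, (u i - v) x ∂μ‖ := by
        rw [← integral_sub hui.integrableOn hvi.integrableOn]; rfl
    _ ≤ ∫ x in A i, ‖(u i - v) x‖ ∂μ := norm_integral_le_integral_norm _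
    _ ≤ ∫ x, ‖(u i - v) x‖ ∂μ :=
        setIntegral_le_integral (hui.sub hvi).norm (ae_of_all _ fun _ => norm_nonneg _)
    _ = (eLpNorm (u i - v) 1 μ).toReal := by
        rw [integral_norm_eq_lintegral_enorm (hui.sub hvi).1, eLpNorm_one_eq_lintegral_enorm]

theorem tendsto_setIntegral_diff_setOf_eq_zero [NormedSpace ℝ E] {f : α → ℝ} {g : α → E}
    (hfm : Measurable f) (hf : Integrable f μ) (hf0 : 0 ≤ᵐ[μ] f) (hg : Integrable g μ)
    {A : ℕ → Set α} (hA : ∀ i, MeasurableSet (A i))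
    (hAf : Tendsto (fun i => ∫ x in A i, f x ∂μ) atTop (𝓝 0)) :
    Tendsto (fun i => ∫ x in A i \ {x | f x = 0}, g x ∂μ) atTop (𝓝 0) := by
  have hZ : MeasurableSet {x | f x = 0} := hfm (measurableSet_singleton 0)
  refine tendsto_of_subseq_tendsto fun ns hns => ?_
  have hL1 : Tendsto (fun n => eLpNorm ((A (ns n)).indicator f - 0) 1 μ) atTop (𝓝 0) := by
    have heq : ∀ n, eLpNorm ((A (ns n)).indicator f - 0) 1 μ =
        ENNReal.ofReal (∫ x in A (ns n), f x ∂μ) := fun n => by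
      rw [sub_zero, eLpNorm_indicator_eq_eLpNorm_restrict (hA _), eLpNorm_one_eq_lintegral_enorm,
        ← ofReal_integral_norm_eq_lintegral_enorm hf.integrableOn]
      congr 1
      exact integral_congr_ae ((ae_restrict_of_ae hf0).mono fun x hx => abs_of_nonneg hx)
    rw [funext heq]
    simpa using ENNReal.tendsto_ofReal (hAf.comp hns)
  obtain ⟨ms, -, hae⟩ := (tendstoInMeasure_of_tendsto_eLpNorm one_ne_zero
    (fun n => hf.1.indicator (hA _)) aestronglyMeasurable_const hL1).exists_seq_tendsto_ae'
  refine ⟨ms, ?_⟩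
  have hDCT := tendsto_integral_of_dominated_convergence (fun x => ‖g x‖)
    (F := fun n => (A (ns (ms n)) \ {x | f x = 0}).indicator g) (f := 0)
    (fun n => hg.1.indicator ((hA _).diff hZ)) hg.norm
    (fun n => ae_of_all _ fun x => norm_indicator_le_norm_self _ _) (hae.mono fun x hx => ?_)
  · simpa [integral_indicator ((hA _).diff hZ)] using hDCT
  by_cases hfx : f x = 0
  · simp [hfx]
  · -- `1_{A n} f x → 0` with `f x ≠ 0` forces `x ∉ A n` eventually
    refine tendsto_const_nhds.congr' ?_
    filter_upwards [hx.eventually_ne (Ne.symm hfx)] with n hn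
    exact (Set.indicator_of_notMem (fun hxA => hn (Set.indicator_of_mem hxA.1 f)) g).symm

theorem limsup_setIntegral_le_setIntegral_inter_setOf_eq_zero [IsFiniteMeasure μ]
    {q : ℝ≥0∞} (hq : 1 ≤ q) {fseq gseq : ℕ → α → ℝ} {f g : α → ℝ}
    (hfseq : ∀ i, MemLp (fseq i) q μ) (hgseq : ∀ i, MemLp (gseq i) q μ)
    (hf : MemLp f q μ) (hg : MemLp g q μ)
    (hgseq0 : ∀ i, 0 ≤ᵐ[μ] gseq i) (hf0 : 0 ≤ᵐ[μ] f) (hg0 : 0 ≤ᵐ[μ] g)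
    (hfconv : Tendsto (fun i => eLpNorm (fseq i - f) q μ) atTop (𝓝 0))
    (hgconv : Tendsto (fun i => eLpNorm (gseq i - g) q μ) atTop (𝓝 0))
    {O : Set α} {A : ℕ → Set α} (hA : ∀ i, MeasurableSet (A i)) (hAO : ∀ i, A i ⊆ O)
    (hmass : Tendsto (fun i => ∫ x in A i, fseq i x ∂μ) atTop (𝓝 0)) :
    limsup (fun i => ∫ x in A i, gseq i x ∂μ) atTop ≤ ∫ x in O ∩ {x | f x = 0}, g x ∂μ := by
  -- a measurable representative of `f`, so that its zero set is measurable
  set f' := hf.1.mk f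
  have hff' : f =ᵐ[μ] f' := hf.1.ae_eq_mk
  have hf'm : Measurable f' := hf.1.stronglyMeasurable_mk.measurable
  have hf'_mass : Tendsto (fun i => ∫ x in A i, f' x ∂μ) atTop (𝓝 0) := by
    have hfA := hmass.sub (tendsto_setIntegral_sub_of_tendsto_eLpNorm hq hfseq hf hfconv A)
    simp only [sub_sub_cancel, sub_zero] at hfA
    exact hfA.congr fun i => integral_congr_ae (ae_restrict_of_ae hff')
  have hg_off_zero := tendsto_setIntegral_diff_setOf_eq_zero hf'm
    ((hf.integrable hq).congr hff') (hf0.trans_eq hff') (hg.integrable hq) hA hf'_mass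
  have hZ : (O ∩ {x | f x = 0} : Set α) =ᵐ[μ] (O ∩ {x | f' x = 0} : Set α) := by
    filter_upwards [hff'] with x hx
    change (x ∈ O ∩ {x | f x = 0}) = (x ∈ O ∩ {x | f' x = 0})
    simp [hx]
  have hg_sub := tendsto_setIntegral_sub_of_tendsto_eLpNorm hq hgseq hg hgconv A
  set c := ∫ x in O ∩ {x | f x = 0}, g x ∂μ with hc
  have hbound : ∀ i, ∫ x in A i, gseq i x ∂μ ≤
      (∫ x in A i, gseq i x ∂μ - ∫ x in A i, g x ∂μ) + ∫ x in A i \ {x | f' x = 0}, g x ∂μ + c :=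
    fun i => by
    have hsplit := integral_inter_add_sdiff (μ := μ) (s := A i) (t := {x | f' x = 0})
      (hf'm (measurableSet_singleton 0)) (hg.integrable hq).integrableOn
    have hmono : ∫ x in A i ∩ {x | f' x = 0}, g x ∂μ ≤ c := by
      rw [hc, setIntegral_congr_set hZ]
      exact setIntegral_mono_set (hg.integrable hq).integrableOn (ae_restrict_of_ae hg0)
        (Set.inter_subset_inter_left _ (hAO i)).eventuallyLE
    linarith
  calc limsup (fun i => ∫ x in A i, gseq i x ∂μ) atTop
      ≤ limsup (fun i => (∫ x in A i, gseq i x ∂μ - ∫ x in A i, g x ∂μ)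
          + ∫ x in A i \ {x | f' x = 0}, g x ∂μ + c) atTop :=
        limsup_le_limsup (Eventually.of_forall hbound)
          (isCoboundedUnder_le_of_le atTop fun i =>
            integral_nonneg_of_ae (ae_restrict_of_ae (hgseq0 i)))
          ((hg_sub.add hg_off_zero).add_const c).isBoundedUnder_le
    _ = c := by simpa using ((hg_sub.add hg_off_zero).add_const c).limsup_eq

theorem stmt9_general (a b : ℝ)
    (fseq gseq : ℕ → ℝ → ℝ) (f g : ℝ → ℝ)
    (hfseq : ∀ i, MemLp (fseq i) 2 (volume.restrict (Set.Icc a b)))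
    (hgseq : ∀ i, MemLp (gseq i) 2 (volume.restrict (Set.Icc a b)))
    (hf : MemLp f 2 (volume.restrict (Set.Icc a b)))
    (hg : MemLp g 2 (volume.restrict (Set.Icc a b)))
    (hgnn : ∀ i x, 0 ≤ gseq i x)
    (hfnn' : ∀ x, 0 ≤ f x) (hgnn' : ∀ x, 0 ≤ g x)
    (hfconv : Tendsto
      (fun i => eLpNorm (fun x => fseq i x - f x) 2 (volume.restrict (Set.Icc a b)))
      atTop (nhds 0))
    (hgconv : Tendsto
      (fun i => eLpNorm (fun x => gseq i x - g x) 2 (volume.restrict (Set.Icc a b)))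
      atTop (nhds 0))
    (O : Set ℝ) (hO : MeasurableSet O) (hOI : O ⊆ Set.Icc a b)
    (L : ℕ → Set ℝ) (hL : ∀ i, MeasurableSet (L i))
    (hmass : Tendsto (fun i => ∫ x in O \ L i, fseq i x) atTop (nhds 0)) :
    atTop.limsup (fun i => ∫ x in O \ L i, gseq i x) ≤
      ∫ x in O ∩ {x | f x = 0}, g x := by
  have : IsFiniteMeasure (volume.restrict (Set.Icc a b)) :=
    isFiniteMeasure_restrict.2 measure_Icc_lt_top.ne
  have hvol : ∀ {s : Set ℝ} (h : ℝ → ℝ), s ⊆ Set.Icc a b →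
      ∫ x in s, h x = ∫ x in s, h x ∂volume.restrict (Set.Icc a b) := fun h hs => by
    rw [Measure.restrict_restrict_of_subset hs]
  have hAI : ∀ i, O \ L i ⊆ Set.Icc a b := fun i => Set.sdiff_subset.trans hOI
  simp only [hvol _ (hAI _), hvol g (Set.inter_subset_left.trans hOI)] at hmass ⊢
  exact limsup_setIntegral_le_setIntegral_inter_setOf_eq_zero one_le_two hfseq hgseq hf hg
    (fun i => ae_of_all _ (hgnn i)) (ae_of_all _ hfnn') (ae_of_all _ hgnn') hfconv hgconv
    (fun i => hO.diff (hL i)) (fun i => Set.sdiff_subset) hmass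

/-- Key lemma on projections (abstract form): if nonnegative `f_i → f` and `g_i → g`
in `L²` of a bounded interval `I`, and the `f_i`-mass of `O \ L_i` tends to `0`, then
the limsup of the `g_i`-mass of `O \ L_i` is bounded by the `g`-mass of the vanishing
locus `O ∩ {f = 0}`. -/
theorem stmt9 (a b : ℝ) (hab : a < b)
    (fseq gseq : ℕ → ℝ → ℝ) (f g : ℝ → ℝ)
    (hfseq : ∀ i, MemLp (fseq i) 2 (volume.restrict (Set.Icc a b)))
    (hgseq : ∀ i, MemLp (gseq i) 2 (volume.restrict (Set.Icc a b)))
    (hf : MemLp f 2 (volume.restrict (Set.Icc a b)))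
    (hg : MemLp g 2 (volume.restrict (Set.Icc a b)))
    (hfnn : ∀ i x, 0 ≤ fseq i x) (hgnn : ∀ i x, 0 ≤ gseq i x)
    (hfnn' : ∀ x, 0 ≤ f x) (hgnn' : ∀ x, 0 ≤ g x)
    (hfconv : Tendsto
      (fun i => eLpNorm (fun x => fseq i x - f x) 2 (volume.restrict (Set.Icc a b)))
      atTop (nhds 0))
    (hgconv : Tendsto
      (fun i => eLpNorm (fun x => gseq i x - g x) 2 (volume.restrict (Set.Icc a b)))
      atTop (nhds 0))
    (O : Set ℝ) (hO : MeasurableSet O) (hOI : O ⊆ Set.Icc a b)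
    (L : ℕ → Set ℝ) (hL : ∀ i, MeasurableSet (L i)) (hLI : ∀ i, L i ⊆ Set.Icc a b)
    (hmass : Tendsto (fun i => ∫ x in O \ L i, fseq i x) atTop (nhds 0)) :
    atTop.limsup (fun i => ∫ x in O \ L i, gseq i x) ≤
      ∫ x in O ∩ {x | f x = 0}, g x :=
  stmt9_general a b fseq gseq f g hfseq hgseq hf hg hgnn hfnn' hgnn' hfconv hgconv O hO hOI L hL
    hmass
end

section
/- Let ψ, f : [0,∞) → [0,∞) be locally integrable, L ∈ ℝ, c > 0, ε ∈ (0,1), and let a : [0,∞) → ℝ with a(s) → 0 as s → ∞, such that ∫₀^s f(t)dt = (L + a(s))·∫₀^s ψ(t)dt for all s. Suppose (s_k) → ∞ satisfies ∫_{(1−ε)s_k}^{s_k} ψ(t)dt ≥ c·ε·∫₀^{s_k} ψ(t)dt > 0 for all k. Then (∫_{(1−ε)s_k}^{s_k} f(t)dt) / (∫_{(1−ε)s_k}^{s_k} ψ(t)dt) → L as k → ∞. -/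
open MeasureTheory Filter intervalIntegral

/-! The window increment of `∫₀^s f = (L + a(s)) ∫₀^s ψ` is
`(L + a(s)) (Q + W) - (L + a((1-ε)s)) Q`, with `Q` the ψ-mass before the window and `W` the mass
inside it, so the window ratio differs from `L` by at most `(|a(s)| + |a((1-ε)s)|) (Q + W) / W`.
Since the window carries a fixed proportion `cε` of the total mass `Q + W`, this error tends to 0. -/

lemma abs_increment_div_sub_le {L A B Q W δ : ℝ} (hδ : 0 < δ) (hQ : 0 ≤ Q) (hW : 0 < W)
    (hwin : δ * (Q + W) ≤ W) :
    |((L + A) * (Q + W) - (L + B) * Q) / W - L| ≤ (|A| + |B|) / δ := by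
  have hsub : ((L + A) * (Q + W) - (L + B) * Q) / W - L = (A * (Q + W) - B * Q) / W := by
    field_simp
    ring
  have hnum : |A * (Q + W) - B * Q| ≤ (|A| + |B|) * (Q + W) :=
    calc |A * (Q + W) - B * Q| ≤ |A| * (Q + W) + |B| * Q := by
          simpa [abs_mul, abs_of_nonneg hQ, abs_of_nonneg (by linarith : 0 ≤ Q + W)]
            using abs_sub (A * (Q + W)) (B * Q)
      _ ≤ (|A| + |B|) * (Q + W) := by nlinarith [abs_nonneg B]
  rw [hsub, abs_div, abs_of_pos hW, div_le_div_iff₀ hW hδ]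
  calc |A * (Q + W) - B * Q| * δ ≤ (|A| + |B|) * (δ * (Q + W)) := by
        nlinarith [abs_nonneg (A * (Q + W) - B * Q)]
    _ ≤ (|A| + |B|) * W := by gcongr

theorem tendsto_increment_ratio_of_eq_mul {F G a : ℝ → ℝ} {L δ : ℝ} (hδ : 0 < δ)
    (ha : Tendsto a atTop (nhds 0)) (hFG : ∀ s, 0 ≤ s → F s = (L + a s) * G s)
    {u v : ℕ → ℝ} (hu : Tendsto u atTop atTop) (hv : Tendsto v atTop atTop)
    (hu0 : ∀ k, 0 ≤ u k) (hv0 : ∀ k, 0 ≤ v k) (hG0 : ∀ k, 0 ≤ G (u k))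
    (hwin : ∀ k, δ * G (v k) ≤ G (v k) - G (u k)) (hpos : ∀ k, 0 < G (v k) - G (u k)) :
    Tendsto (fun k => (F (v k) - F (u k)) / (G (v k) - G (u k))) atTop (nhds L) := by
  have herr : Tendsto (fun k => (|a (v k)| + |a (u k)|) / δ) atTop (nhds 0) := by
    simpa using ((ha.comp hv).abs.add (ha.comp hu).abs).div_const δ
  rw [← tendsto_sub_nhds_zero_iff]
  refine squeeze_zero_norm (fun k => ?_) herr
  have hsplit : G (v k) = G (u k) + (G (v k) - G (u k)) := by ring
  rw [Real.norm_eq_abs, hFG _ (hv0 k), hFG _ (hu0 k), hsplit, add_sub_cancel_left]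
  exact abs_increment_div_sub_le hδ (hG0 k) (hpos k) (hsplit ▸ hwin k)

lemma integral_eq_sub_of_integrableOn_Icc_zero {g : ℝ → ℝ} {u v : ℝ} (hu : 0 ≤ u) (hv : 0 ≤ v)
    (hgu : IntegrableOn g (Set.Icc 0 u)) (hgv : IntegrableOn g (Set.Icc 0 v)) :
    ∫ t in u..v, g t = (∫ t in (0 : ℝ)..v, g t) - ∫ t in (0 : ℝ)..u, g t :=
  (integral_interval_sub_left ((intervalIntegrable_iff_integrableOn_Icc_of_le hv).2 hgv)
    ((intervalIntegrable_iff_integrableOn_Icc_of_le hu).2 hgu)).symm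

theorem stmt11_general (ψ f : ℝ → ℝ) (L c ε : ℝ) (hc : 0 < c) (hε0 : 0 < ε) (hε1 : ε < 1)
    (hψnn : ∀ t, 0 ≤ t → 0 ≤ ψ t)
    (hψint : ∀ s : ℝ, IntegrableOn ψ (Set.Icc 0 s))
    (hfint : ∀ s : ℝ, IntegrableOn f (Set.Icc 0 s))
    (aerr : ℝ → ℝ) (ha : Tendsto aerr atTop (nhds 0))
    (hhopf : ∀ s : ℝ, 0 ≤ s →
      (∫ t in (0 : ℝ)..s, f t) = (L + aerr s) * ∫ t in (0 : ℝ)..s, ψ t)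
    (s : ℕ → ℝ) (hs : Tendsto s atTop atTop) (hspos : ∀ k, 0 < s k)
    (hwin : ∀ k, c * ε * ∫ t in (0 : ℝ)..s k, ψ t ≤
      ∫ t in ((1 - ε) * s k)..s k, ψ t)
    (hwinpos : ∀ k, 0 < ∫ t in ((1 - ε) * s k)..s k, ψ t) :
    Tendsto (fun k =>
        (∫ t in ((1 - ε) * s k)..s k, f t) / ∫ t in ((1 - ε) * s k)..s k, ψ t)
      atTop (nhds L) := by
  have h1ε : 0 < 1 - ε := by linarith
  have hu0 : ∀ k, 0 ≤ (1 - ε) * s k := fun k => mul_nonneg h1ε.le (hspos k).le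
  have hsplit : ∀ g : ℝ → ℝ, (∀ σ : ℝ, IntegrableOn g (Set.Icc 0 σ)) → ∀ k,
      ∫ t in ((1 - ε) * s k)..s k, g t =
        (∫ t in (0 : ℝ)..s k, g t) - ∫ t in (0 : ℝ)..(1 - ε) * s k, g t :=
    fun g hg k => integral_eq_sub_of_integrableOn_Icc_zero (hu0 k) (hspos k).le (hg _) (hg _)
  simp only [hsplit f hfint, hsplit ψ hψint] at hwin hwinpos ⊢
  exact tendsto_increment_ratio_of_eq_mul (mul_pos hc hε0) ha hhopf
    (hs.const_mul_atTop h1ε) hs hu0 (fun k => (hspos k).le)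
    (fun k => integral_nonneg (hu0 k) fun t ht => hψnn t ht.1) hwin hwinpos

/-- Window ratio convergence: if `∫₀^s f = (L + a(s))·∫₀^s ψ` with `a(s) → 0`, and the
windows `[(1−ε)s_k, s_k]` capture at least a `cε`-fraction of `∫₀^{s_k} ψ > 0`, then
the window ratios `∫_{(1−ε)s_k}^{s_k} f / ∫_{(1−ε)s_k}^{s_k} ψ` converge to `L`. -/
theorem stmt11 (ψ f : ℝ → ℝ) (L c ε : ℝ) (hc : 0 < c) (hε0 : 0 < ε) (hε1 : ε < 1)
    (hψnn : ∀ t, 0 ≤ t → 0 ≤ ψ t) (hfnn : ∀ t, 0 ≤ t → 0 ≤ f t)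
    (hψint : ∀ s : ℝ, IntegrableOn ψ (Set.Icc 0 s))
    (hfint : ∀ s : ℝ, IntegrableOn f (Set.Icc 0 s))
    (aerr : ℝ → ℝ) (ha : Tendsto aerr atTop (nhds 0))
    (hhopf : ∀ s : ℝ, 0 ≤ s →
      (∫ t in (0 : ℝ)..s, f t) = (L + aerr s) * ∫ t in (0 : ℝ)..s, ψ t)
    (s : ℕ → ℝ) (hs : Tendsto s atTop atTop) (hspos : ∀ k, 0 < s k)
    (hwin : ∀ k, c * ε * ∫ t in (0 : ℝ)..s k, ψ t ≤
      ∫ t in ((1 - ε) * s k)..s k, ψ t)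
    (hwinpos : ∀ k, 0 < ∫ t in ((1 - ε) * s k)..s k, ψ t) :
    Tendsto (fun k =>
        (∫ t in ((1 - ε) * s k)..s k, f t) / ∫ t in ((1 - ε) * s k)..s k, ψ t)
      atTop (nhds L) :=
  stmt11_general ψ f L c ε hc hε0 hε1 hψnn hψint hfint aerr ha hhopf s hs hspos hwin hwinpos
end
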